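/- arXiv:1304.2537 — 10 statements merged into one kernel-verified Lean document; each statement's English description precedes it below -/
import Mathlib

section
/- Let 𝒮' ⊆ 𝒮 satisfy condition (♣): for each S ∈ 𝒮' there is ε > 0 such that whenever S ⊆ B^ε there is S_B ∈ 𝒮' with S_B ⊆ B. Then the set ⋃_{S ∈ 𝒮'} {A | S ⊆ A} is open for the pretopology of lower bornological convergence, i.e., for every A in this set there exist S ∈ 𝒮 and ε > 0 such that {B | A ∩ S ⊆ B^ε} is contained in this set. -/
open Metric Set

def IsIdeal {X : Type*} (𝒮 : Set (Set X)) : Prop :=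
  ∅ ∈ 𝒮 ∧ (∀ S ∈ 𝒮, ∀ S' ⊆ S, S' ∈ 𝒮) ∧ (∀ S ∈ 𝒮, ∀ S' ∈ 𝒮, S ∪ S' ∈ 𝒮)

theorem stmt_2 {X : Type*} [MetricSpace X] (𝒮 𝒮' : Set (Set X)) (hS : IsIdeal 𝒮)
    (hsub : 𝒮' ⊆ 𝒮)
    (hclub : ∀ S ∈ 𝒮', ∃ ε > 0, ∀ B : Set X, S ⊆ Metric.thickening ε B →
      ∃ SB ∈ 𝒮', SB ⊆ B) :
    ∀ A ∈ {A : Set X | ∃ S ∈ 𝒮', S ⊆ A}, ∃ S ∈ 𝒮, ∃ ε > 0,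
      {B : Set X | A ∩ S ⊆ Metric.thickening ε B} ⊆ {A : Set X | ∃ S ∈ 𝒮', S ⊆ A} := by
  rintro A ⟨S, hS', hSA⟩
  obtain ⟨ε, hε, h⟩ := hclub S hS'
  refine ⟨S, hsub hS', ε, hε, ?_⟩
  intro B hB
  obtain ⟨SB, hSB, hSBB⟩ := h B fun x hx => hB ⟨hSA hx, hx⟩
  exact ⟨SB, hSB, hSBB⟩
end

section
/- If 𝒢 is an open set for the pretopology of lower bornological convergence, then 𝒢 = ⋃_{S ∈ 𝒮'} {A | S ⊆ A} where 𝒮' = 𝒢 ∩ 𝒮 (the bounded members of 𝒢), and 𝒮' satisfies condition (♣). -/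
open Metric Set

theorem stmt_3 {X : Type*} [MetricSpace X] (𝒮 : Set (Set X)) (hS : IsIdeal 𝒮)
    (𝒢 : Set (Set X))
    (hopen : ∀ A ∈ 𝒢, ∃ S ∈ 𝒮, ∃ ε > 0,
      {B : Set X | A ∩ S ⊆ Metric.thickening ε B} ⊆ 𝒢) :
    𝒢 = {A : Set X | ∃ S ∈ 𝒢 ∩ 𝒮, S ⊆ A} ∧
    (∀ S ∈ 𝒢 ∩ 𝒮, ∃ ε > 0, ∀ B : Set X, S ⊆ Metric.thickening ε B →
      ∃ SB ∈ 𝒢 ∩ 𝒮, SB ⊆ B) := by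
  have key : 𝒢 = {A : Set X | ∃ S ∈ 𝒢 ∩ 𝒮, S ⊆ A} := by
    ext A
    constructor
    · intro hA
      obtain ⟨S, hSmem, ε, hε, hsub⟩ := hopen A hA
      refine ⟨A ∩ S, ⟨?_, hS.2.1 S hSmem _ inter_subset_right⟩, inter_subset_left⟩
      exact hsub (self_subset_thickening hε _)
    · rintro ⟨S, ⟨hSG, _⟩, hSA⟩
      obtain ⟨S', _, ε, hε, hsub⟩ := hopen S hSG
      exact hsub ((inter_subset_left.trans hSA).trans (self_subset_thickening hε _))
  refine ⟨key, ?_⟩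
  rintro S ⟨hSG, hSS⟩
  obtain ⟨S', _, ε, hε, hsub⟩ := hopen S hSG
  refine ⟨ε, hε, fun B hB => ?_⟩
  have hBG : B ∈ 𝒢 := hsub (inter_subset_left.trans hB)
  rw [key] at hBG
  exact hBG
end

section
/- A collection 𝒢 of subsets of X is open for the pretopology of upper bornological convergence if and only if 𝒢 = ⋃_{C ∈ 𝒞} {A | A ⊆ C} for some collection 𝒞 of cobounded sets that is stable under small enlargements (for each C ∈ 𝒞 there is ε > 0 with C^ε ∈ 𝒞). -/
open Metric Set

theorem stmt_4 {X : Type*} [MetricSpace X] (𝒮 : Set (Set X)) (hS : IsIdeal 𝒮)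
    (𝒢 : Set (Set X)) :
    (∀ A ∈ 𝒢, ∃ S ∈ 𝒮, ∃ ε > 0,
        {B : Set X | B ∩ S ⊆ Metric.thickening ε A} ⊆ 𝒢) ↔
    (∃ 𝒞 : Set (Set X), (∀ C ∈ 𝒞, Cᶜ ∈ 𝒮) ∧
        (∀ C ∈ 𝒞, ∃ ε > 0, Metric.thickening ε C ∈ 𝒞) ∧
        𝒢 = {A : Set X | ∃ C ∈ 𝒞, A ⊆ C}) := by
  obtain ⟨hempty, hdown, hunion⟩ := hS
  constructor
  · intro h
    refine ⟨{C | Cᶜ ∈ 𝒮 ∧ ∀ B ⊆ C, B ∈ 𝒢}, fun C hC => hC.1, ?_, ?_⟩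
    · rintro C ⟨hCc, hCsub⟩
      obtain ⟨S₁, hS₁, ε₁, hε₁, hw⟩ := h C (hCsub C subset_rfl)
      refine ⟨ε₁, hε₁, ?_, ?_⟩
      · exact hdown Cᶜ hCc _
          (compl_subset_compl.mpr (self_subset_thickening hε₁ C))
      · intro B hB
        exact hw (fun x hx => hB hx.1)
    · ext A
      constructor
      · intro hA
        obtain ⟨S, hSmem, ε, hε, hw⟩ := h A hA
        refine ⟨thickening ε A ∪ Sᶜ, ⟨?_, ?_⟩, ?_⟩
        · apply hdown S hSmem
          intro x hx
          simp only [compl_union, compl_compl, mem_inter_iff] at hx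
          exact hx.2
        · intro B hB
          apply hw
          intro x hx
          rcases hB hx.1 with h1 | h2
          · exact h1
          · exact absurd hx.2 h2
        · exact subset_union_of_subset_left (self_subset_thickening hε A) _
      · rintro ⟨C, ⟨_, hCsub⟩, hAC⟩
        exact hCsub A hAC
  · rintro ⟨𝒞, hcob, hthick, rfl⟩
    rintro A ⟨C, hC, hAC⟩
    obtain ⟨ε, hε, hCε⟩ := hthick C hC
    refine ⟨Cᶜ, hcob C hC, ε, hε, ?_⟩
    intro B hB
    refine ⟨thickening ε C, hCε, ?_⟩
    intro x hx
    by_cases hxC : x ∈ C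
    · exact self_subset_thickening hε C hxC
    · exact thickening_subset_of_subset ε hAC (hB ⟨hx, hxC⟩)
end

section
/- Given an ideal 𝒮 of subsets of X and a lower hyperspace topology T on the powerset of X (every T-open set is upward closed), the operator cl_𝒮^T defined by A ∈ cl_𝒮^T(𝒜) iff every S ∈ 𝒮 with S ⊆ A satisfies S ∈ cl^T(𝒜), is a Čech closure operator: extensive, monotone, and cl_𝒮^T(𝒜 ∪ ℬ) = cl_𝒮^T(𝒜) ∪ cl_𝒮^T(ℬ). -/
open Set Topology

/-- The lower bornological modification of a hyperspace topology `T`. -/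
def lowerModCl {X : Type*} (𝒮 : Set (Set X)) (T : TopologicalSpace (Set X))
    (𝒜 : Set (Set X)) : Set (Set X) :=
  {A | ∀ S ∈ 𝒮, S ⊆ A → S ∈ @closure (Set X) T 𝒜}

lemma closure_dc {X : Type*} (T : TopologicalSpace (Set X))
    (hT : ∀ 𝒢 : Set (Set X), IsOpen[T] 𝒢 → ∀ A ∈ 𝒢, ∀ B : Set X, A ⊆ B → B ∈ 𝒢)
    {𝒜 : Set (Set X)} {S S' : Set X} (hsub : S' ⊆ S)
    (hS : S ∈ @closure (Set X) T 𝒜) : S' ∈ @closure (Set X) T 𝒜 := by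
  rw [@mem_closure_iff] at hS ⊢
  intro 𝒢 h𝒢 hmem
  exact hS 𝒢 h𝒢 (hT 𝒢 h𝒢 S' hmem S hsub)

theorem stmt_8 {X : Type*} (𝒮 : Set (Set X)) (hS : IsIdeal 𝒮)
    (T : TopologicalSpace (Set X))
    (hT : ∀ 𝒢 : Set (Set X), IsOpen[T] 𝒢 → ∀ A ∈ 𝒢, ∀ B : Set X, A ⊆ B → B ∈ 𝒢) :
    (∀ 𝒜 : Set (Set X), 𝒜 ⊆ lowerModCl 𝒮 T 𝒜) ∧
    (∀ 𝒜 ℬ : Set (Set X), 𝒜 ⊆ ℬ → lowerModCl 𝒮 T 𝒜 ⊆ lowerModCl 𝒮 T ℬ) ∧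
    (∀ 𝒜 ℬ : Set (Set X),
      lowerModCl 𝒮 T (𝒜 ∪ ℬ) = lowerModCl 𝒮 T 𝒜 ∪ lowerModCl 𝒮 T ℬ) := by
  refine ⟨?_, ?_, ?_⟩
  · intro 𝒜 A hA S _ hSA
    exact closure_dc T hT hSA (subset_closure hA)
  · intro 𝒜 ℬ h A hA S hSmem hSA
    exact closure_mono h (hA S hSmem hSA)
  · intro 𝒜 ℬ
    apply Subset.antisymm
    · intro A hA
      by_contra h
      rw [mem_union, not_or] at h
      obtain ⟨h1, h2⟩ := h
      simp only [lowerModCl, mem_setOf_eq, not_forall] at h1 h2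
      obtain ⟨S₁, hS₁, hS₁A, hS₁c⟩ := h1
      obtain ⟨S₂, hS₂, hS₂A, hS₂c⟩ := h2
      have hU : S₁ ∪ S₂ ∈ 𝒮 := hS.2.2 S₁ hS₁ S₂ hS₂
      have := hA (S₁ ∪ S₂) hU (union_subset hS₁A hS₂A)
      rw [closure_union] at this
      rcases this with h | h
      · exact hS₁c (closure_dc T hT subset_union_left h)
      · exact hS₂c (closure_dc T hT subset_union_right h)
    · rintro A (hA | hA) S hSmem hSA
      · exact closure_mono subset_union_left (hA S hSmem hSA)
      · exact closure_mono subset_union_right (hA S hSmem hSA)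
end

section
/- Let T be a lower hyperspace topology and 𝒮, 𝒮* ideals of subsets of X. Then cl_𝒮^T is finer than cl_{𝒮*}^T if and only if every S* ∈ 𝒮* belongs to cl^T({S ∈ 𝒮 | S ⊆ S*}). -/
open Set Topology

theorem stmt_9 {X : Type*} (𝒮 𝒮star : Set (Set X))
    (hS : IsIdeal 𝒮) (hSstar : IsIdeal 𝒮star)
    (T : TopologicalSpace (Set X))
    (hT : ∀ 𝒢 : Set (Set X), IsOpen[T] 𝒢 → ∀ A ∈ 𝒢, ∀ B : Set X, A ⊆ B → B ∈ 𝒢) :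
    (∀ 𝒜 : Set (Set X), lowerModCl 𝒮 T 𝒜 ⊆ lowerModCl 𝒮star T 𝒜) ↔
    (∀ Sstar ∈ 𝒮star, Sstar ∈ @closure (Set X) T {S ∈ 𝒮 | S ⊆ Sstar}) := by
  letI := T
  constructor
  · intro h Sstar hSs
    have h1 : Sstar ∈ lowerModCl 𝒮 T {S ∈ 𝒮 | S ⊆ Sstar} := by
      intro S hSmem hSsub
      exact subset_closure ⟨hSmem, hSsub⟩
    exact h _ h1 Sstar hSs subset_rfl
  · intro h 𝒜 A hA Sstar hSs hsub
    have key : {S ∈ 𝒮 | S ⊆ Sstar} ⊆ @closure (Set X) T 𝒜 := by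
      rintro S ⟨hS1, hS2⟩
      exact hA S hS1 (hS2.trans hsub)
    have := closure_mono key
    rw [closure_closure] at this
    exact this (h Sstar hSs)
end

section
/- For a lower hyperspace topology T on the powerset of X and an ideal 𝒮, the closure operator cl_𝒮^T equals the composition cl_{τ(𝒮)} ∘ cl^T, i.e., for every collection 𝒜, cl_𝒮^T(𝒜) = cl_{τ(𝒮)}(cl^T(𝒜)). -/
open Set Topology

def tauS {X : Type*} (𝒮 : Set (Set X)) : TopologicalSpace (Set X) :=
  TopologicalSpace.generateFrom
    {U | ∃ S ∈ 𝒮, ∃ S' ∈ 𝒮, U = {C : Set X | S ⊆ C ∧ C ∩ S' = ∅}}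

/-! Since `T`-open sets are upward closed, `cl^T(𝒜)` is downward closed. The intervals `[S, S']`
with `S, S' ∈ 𝒮` are stable under intersection and contain `[∅, ∅] = univ`, so they form a basis
of `τ(𝒮)`. Testing `A ∈ cl_{τ(𝒮)}(cl^T 𝒜)` on the intervals `[S, ∅]` and using downward
closedness gives `S ∈ cl^T 𝒜` for every `S ∈ 𝒮` below `A`; conversely such an `S` is itself a
point of `[S, S'] ∩ cl^T 𝒜`. -/

theorem isLowerSet_closure_of_forall_isOpen_isUpperSet {α : Type*} [Preorder α]
    [TopologicalSpace α] (hopen : ∀ U : Set α, IsOpen U → IsUpperSet U) (s : Set α) :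
    IsLowerSet (closure s) := by
  rw [closure_eq_compl_interior_compl]
  exact (hopen _ isOpen_interior).compl

namespace tauS

variable {X : Type*}

def interval (S S' : Set X) : Set (Set X) :=
  {C | S ⊆ C ∧ C ∩ S' = ∅}

theorem interval_empty_empty : interval (∅ : Set X) ∅ = univ := by
  ext C
  simp [interval]

theorem interval_inter_interval (S₁ S₁' S₂ S₂' : Set X) :
    interval S₁ S₁' ∩ interval S₂ S₂' = interval (S₁ ∪ S₂) (S₁' ∪ S₂') := by
  ext C
  simp only [interval, mem_inter_iff, mem_ofPred_eq, union_subset_iff, inter_union_distrib_left,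
    union_empty_iff]
  tauto

variable (𝒮 : Set (Set X))

def intervals : Set (Set (Set X)) :=
  {U | ∃ S ∈ 𝒮, ∃ S' ∈ 𝒮, U = interval S S'}

variable {𝒮}

theorem finiteInter_intervals (hempty : ∅ ∈ 𝒮) (hunion : ∀ S ∈ 𝒮, ∀ S' ∈ 𝒮, S ∪ S' ∈ 𝒮) :
    FiniteInter (intervals 𝒮) where
  univ_mem := ⟨∅, hempty, ∅, hempty, interval_empty_empty.symm⟩
  inter_mem := by
    rintro _ ⟨S₁, hS₁, S₁', hS₁', rfl⟩ _ ⟨S₂, hS₂, S₂', hS₂', rfl⟩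
    exact ⟨_, hunion _ hS₁ _ hS₂, _, hunion _ hS₁' _ hS₂', interval_inter_interval ..⟩

theorem isTopologicalBasis_intervals (hempty : ∅ ∈ 𝒮)
    (hunion : ∀ S ∈ 𝒮, ∀ S' ∈ 𝒮, S ∪ S' ∈ 𝒮) :
    @TopologicalSpace.IsTopologicalBasis _ (tauS 𝒮) (intervals 𝒮) :=
  @TopologicalSpace.isTopologicalBasis_of_subbasis_of_finiteInter _ (tauS 𝒮) _ rfl
    (finiteInter_intervals hempty hunion)

theorem mem_closure_iff (hempty : ∅ ∈ 𝒮) (hunion : ∀ S ∈ 𝒮, ∀ S' ∈ 𝒮, S ∪ S' ∈ 𝒮)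
    {𝒜 : Set (Set X)} {A : Set X} :
    A ∈ @closure _ (tauS 𝒮) 𝒜 ↔
      ∀ S ∈ 𝒮, ∀ S' ∈ 𝒮, S ⊆ A → A ∩ S' = ∅ → ∃ C ∈ 𝒜, S ⊆ C ∧ C ∩ S' = ∅ := by
  rw [@TopologicalSpace.IsTopologicalBasis.mem_closure_iff _ (tauS 𝒮) _
    (isTopologicalBasis_intervals hempty hunion)]
  constructor
  · rintro h S hS S' hS' hSA hAS'
    obtain ⟨C, hC, hC𝒜⟩ := h _ ⟨S, hS, S', hS', rfl⟩ ⟨hSA, hAS'⟩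
    exact ⟨C, hC𝒜, hC⟩
  · rintro h _ ⟨S, hS, S', hS', rfl⟩ ⟨hSA, hAS'⟩
    obtain ⟨C, hC𝒜, hC⟩ := h S hS S' hS' hSA hAS'
    exact ⟨C, hC, hC𝒜⟩

end tauS

theorem stmt_13 {X : Type*} (𝒮 : Set (Set X)) (hS : IsIdeal 𝒮)
    (T : TopologicalSpace (Set X))
    (hT : ∀ 𝒢 : Set (Set X), IsOpen[T] 𝒢 → ∀ A ∈ 𝒢, ∀ B : Set X, A ⊆ B → B ∈ 𝒢) :
    ∀ 𝒜 : Set (Set X),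
      lowerModCl 𝒮 T 𝒜 = @closure (Set X) (tauS 𝒮) (@closure (Set X) T 𝒜) := by
  intro 𝒜
  obtain ⟨hempty, -, hunion⟩ := hS
  have hlower : IsLowerSet (@closure _ T 𝒜) :=
    @isLowerSet_closure_of_forall_isOpen_isUpperSet _ _ T
      (fun 𝒢 h𝒢 _ _ hAB hA ↦ hT 𝒢 h𝒢 _ hA _ hAB) 𝒜
  ext A
  rw [tauS.mem_closure_iff hempty hunion]
  constructor
  · intro hA S hS _ _ hSA hAS'
    refine ⟨S, hA S hS hSA, subset_rfl, ?_⟩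
    exact subset_empty_iff.mp (hAS' ▸ inter_subset_inter_left _ hSA)
  · intro hA S hS hSA
    obtain ⟨C, hC, hSC, -⟩ := hA S hS ∅ hempty hSA (inter_empty A)
    exact hlower hSC hC
end

section
/- For a lower hyperspace topology T and ideal 𝒮, the closure operator cl_𝒮^T is idempotent (topological) if and only if cl_{τ(𝒮)}(𝒜) is T-closed whenever 𝒜 is T-closed. -/
open Set Topology

/-! `cl_𝒮^T = cl_{τ(𝒮)} ∘ cl^T`: a `T`-closed family is a lower set, and for a lower set `𝒞`
the `τ(𝒮)`-closure consists of the `A` all of whose subsets from `𝒮` lie in `𝒞`, since the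
basic neighbourhood `[S, S']` of `A` contains `S` itself. The equivalence then holds for any
two topologies: `cl₂ ∘ cl₁` is idempotent iff `cl₂` preserves `cl₁`-closed sets. -/

theorem closure_comp_closure_idempotent_iff {α : Type*} (t₁ t₂ : TopologicalSpace α) :
    (∀ s : Set α, closure[t₂] (closure[t₁] (closure[t₂] (closure[t₁] s))) =
      closure[t₂] (closure[t₁] s)) ↔
    ∀ s : Set α, IsClosed[t₁] s → IsClosed[t₁] (closure[t₂] s) := by
  constructor
  · intro hidem s hs
    have hidem_s := hidem s
    rw [@IsClosed.closure_eq _ t₁ _ hs] at hidem_s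
    refine @isClosed_of_closure_subset _ t₁ _ ?_
    calc closure[t₁] (closure[t₂] s)
        ⊆ closure[t₂] (closure[t₁] (closure[t₂] s)) := @subset_closure _ t₂ _
      _ = closure[t₂] s := hidem_s
  · intro hpres s
    rw [@IsClosed.closure_eq _ t₁ _ (hpres _ (@isClosed_closure _ t₁ s)), @closure_closure _ t₂]

section LowerHyperspace

variable {X : Type*} {𝒮 : Set (Set X)}

theorem finiteInter_tauS_subbasis (hS : IsIdeal 𝒮) :
    FiniteInter {U | ∃ S ∈ 𝒮, ∃ S' ∈ 𝒮, U = {C : Set X | S ⊆ C ∧ C ∩ S' = ∅}} where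
  univ_mem := ⟨∅, hS.1, ∅, hS.1, by ext; simp⟩
  inter_mem := by
    rintro _ ⟨S₁, hS₁, S₁', hS₁', rfl⟩ _ ⟨S₂, hS₂, S₂', hS₂', rfl⟩
    refine ⟨S₁ ∪ S₂, hS.2.2 _ hS₁ _ hS₂, S₁' ∪ S₂', hS.2.2 _ hS₁' _ hS₂', ?_⟩
    ext C
    simp only [mem_inter_iff, mem_ofPred_eq, union_subset_iff, inter_union_distrib_left,
      union_empty_iff]
    tauto

theorem isTopologicalBasis_tauS (hS : IsIdeal 𝒮) :
    @TopologicalSpace.IsTopologicalBasis (Set X) (tauS 𝒮)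
      {U | ∃ S ∈ 𝒮, ∃ S' ∈ 𝒮, U = {C : Set X | S ⊆ C ∧ C ∩ S' = ∅}} :=
  @TopologicalSpace.isTopologicalBasis_of_subbasis_of_finiteInter _ (tauS 𝒮) _ rfl
    (finiteInter_tauS_subbasis hS)

theorem mem_closure_tauS_iff (hS : IsIdeal 𝒮) {𝒞 : Set (Set X)} (h𝒞 : IsLowerSet 𝒞)
    {A : Set X} : A ∈ closure[tauS 𝒮] 𝒞 ↔ ∀ S ∈ 𝒮, S ⊆ A → S ∈ 𝒞 := by
  rw [@TopologicalSpace.IsTopologicalBasis.mem_closure_iff _ (tauS 𝒮) _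
    (isTopologicalBasis_tauS hS)]
  constructor
  · intro h S hS𝒮 hSA
    obtain ⟨C, ⟨hSC, -⟩, hC⟩ :=
      h {C | S ⊆ C ∧ C ∩ ∅ = ∅} ⟨S, hS𝒮, ∅, hS.1, rfl⟩ ⟨hSA, inter_empty A⟩
    exact h𝒞 hSC hC
  · rintro h _ ⟨S, hS𝒮, S', -, rfl⟩ ⟨hSA, hAS'⟩
    exact ⟨S, ⟨Subset.rfl, subset_empty_iff.mp (hAS' ▸ inter_subset_inter_left S' hSA)⟩,
      h S hS𝒮 hSA⟩

variable {T : TopologicalSpace (Set X)}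

theorem isLowerSet_of_isClosed
    (hT : ∀ 𝒢 : Set (Set X), IsOpen[T] 𝒢 → ∀ A ∈ 𝒢, ∀ B : Set X, A ⊆ B → B ∈ 𝒢)
    {𝒜 : Set (Set X)} (h𝒜 : IsClosed[T] 𝒜) : IsLowerSet 𝒜 :=
  isUpperSet_compl.mp fun _ _ hAB hA ↦ hT _ h𝒜.isOpen_compl _ hA _ hAB

theorem lowerModCl_eq_closure_tauS_closure (hS : IsIdeal 𝒮)
    (hT : ∀ 𝒢 : Set (Set X), IsOpen[T] 𝒢 → ∀ A ∈ 𝒢, ∀ B : Set X, A ⊆ B → B ∈ 𝒢)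
    (𝒜 : Set (Set X)) : lowerModCl 𝒮 T 𝒜 = closure[tauS 𝒮] (closure[T] 𝒜) := by
  ext A
  rw [mem_closure_tauS_iff hS (isLowerSet_of_isClosed hT (@isClosed_closure _ T 𝒜))]
  rfl

end LowerHyperspace

theorem stmt_14 {X : Type*} (𝒮 : Set (Set X)) (hS : IsIdeal 𝒮)
    (T : TopologicalSpace (Set X))
    (hT : ∀ 𝒢 : Set (Set X), IsOpen[T] 𝒢 → ∀ A ∈ 𝒢, ∀ B : Set X, A ⊆ B → B ∈ 𝒢) :
    (∀ 𝒜 : Set (Set X), lowerModCl 𝒮 T (lowerModCl 𝒮 T 𝒜) = lowerModCl 𝒮 T 𝒜) ↔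
    (∀ 𝒜 : Set (Set X), IsClosed[T] 𝒜 →
      IsClosed[T] (@closure (Set X) (tauS 𝒮) 𝒜)) := by
  simp only [lowerModCl_eq_closure_tauS_closure hS hT]
  exact closure_comp_closure_idempotent_iff T (tauS 𝒮)
end

section
/- For a lower hyperspace topology T and ideal 𝒮, a collection 𝒜 is closed for the operator cl_𝒮^T (i.e., cl_𝒮^T(𝒜) = 𝒜) if and only if 𝒜 is closed in the topology T ∧ τ(𝒮) (the infimum of the two topologies). Hence T ∧ τ(𝒮) is the topological reflection of the pretopology defined by cl_𝒮^T. -/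
open Set Topology

private lemma mem_closure_iff' {α : Type*} (t : TopologicalSpace α) {s : Set α} {x : α} :
    x ∈ @closure α t s ↔ ∀ o, IsOpen[t] o → x ∈ o → (o ∩ s).Nonempty := by
  letI := t; exact mem_closure_iff

private lemma closure_subset_iff_isClosed' {α : Type*} (t : TopologicalSpace α) {s : Set α} :
    @closure α t s ⊆ s ↔ IsClosed[t] s := by
  letI := t; exact closure_subset_iff_isClosed

/-- A collection is closed in the infimum topology `T ∧ τ(𝒮)` iff it is closed in both;
so the infimum topology is the topological reflection of the pretopology `cl_𝒮^T`. -/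
theorem stmt_15 {X : Type*} (𝒮 : Set (Set X)) (hS : IsIdeal 𝒮)
    (T : TopologicalSpace (Set X))
    (hT : ∀ 𝒢 : Set (Set X), IsOpen[T] 𝒢 → ∀ A ∈ 𝒢, ∀ B : Set X, A ⊆ B → B ∈ 𝒢) :
    ∀ 𝒜 : Set (Set X),
      lowerModCl 𝒮 T 𝒜 = 𝒜 ↔ (IsClosed[T] 𝒜 ∧ IsClosed[tauS 𝒮] 𝒜) := by
  obtain ⟨h0, hdown, hunion⟩ := hS
  intro 𝒜
  -- every open set of tauS 𝒮 contains a basic neighborhood of each of its points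
  have key : ∀ U : Set (Set X), IsOpen[tauS 𝒮] U → ∀ A ∈ U,
      ∃ S ∈ 𝒮, ∃ S' ∈ 𝒮, S ⊆ A ∧ A ∩ S' = ∅ ∧
        {C : Set X | S ⊆ C ∧ C ∩ S' = ∅} ⊆ U := by
    intro U hU
    induction hU with
    | basic V hV =>
        obtain ⟨S, hS1, S', hS'1, rfl⟩ := hV
        intro A hA
        exact ⟨S, hS1, S', hS'1, hA.1, hA.2, subset_rfl⟩
    | univ =>
        intro A _
        exact ⟨∅, h0, ∅, h0, empty_subset _, by simp, fun _ _ => trivial⟩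
    | inter U V hU hV ihU ihV =>
        intro A hA
        obtain ⟨S1, hS1, T1, hT1, hsub1, hdisj1, hcon1⟩ := ihU A hA.1
        obtain ⟨S2, hS2, T2, hT2, hsub2, hdisj2, hcon2⟩ := ihV A hA.2
        refine ⟨S1 ∪ S2, hunion _ hS1 _ hS2, T1 ∪ T2, hunion _ hT1 _ hT2,
          union_subset hsub1 hsub2, ?_, ?_⟩
        · rw [inter_union_distrib_left, hdisj1, hdisj2, union_empty]
        · rintro C ⟨hCS, hCT⟩
          have hCT1 : C ∩ T1 = ∅ := by
            apply subset_empty_iff.mp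
            rw [← hCT]; exact inter_subset_inter_right _ subset_union_left
          have hCT2 : C ∩ T2 = ∅ := by
            apply subset_empty_iff.mp
            rw [← hCT]; exact inter_subset_inter_right _ subset_union_right
          exact ⟨hcon1 ⟨subset_union_left.trans hCS, hCT1⟩,
                 hcon2 ⟨subset_union_right.trans hCS, hCT2⟩⟩
    | sUnion 𝒰 h ih =>
        rintro A ⟨U, hU𝒰, hAU⟩
        obtain ⟨S, hS1, S', hS'1, h1, h2, h3⟩ := ih U hU𝒰 A hAU
        exact ⟨S, hS1, S', hS'1, h1, h2, h3.trans (subset_sUnion_of_mem hU𝒰)⟩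
  -- 𝒜 ⊆ lowerModCl 𝒮 T 𝒜 always (opens are upward closed)
  have hsub : 𝒜 ⊆ lowerModCl 𝒮 T 𝒜 := by
    intro A hA S _ hSA
    rw [mem_closure_iff' T]
    intro o ho hSo
    exact ⟨A, hT o ho S hSo A hSA, hA⟩
  constructor
  · intro hcl
    constructor
    · -- T-closed
      rw [← closure_subset_iff_isClosed' T]
      intro A hA
      rw [← hcl]
      intro S hSmem hSA
      rw [mem_closure_iff' T] at hA ⊢
      intro o ho hSo
      exact hA o ho (hT o ho S hSo A hSA)
    · -- tauS-closed
      rw [← @isOpen_compl_iff _ _ (tauS 𝒮)]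
      have : 𝒜ᶜ = ⋃₀ {V : Set (Set X) | (∃ S ∈ 𝒮, V = {C : Set X | S ⊆ C}) ∧ V ⊆ 𝒜ᶜ} := by
        apply Subset.antisymm
        · intro A hA
          have : A ∉ lowerModCl 𝒮 T 𝒜 := by rw [hcl]; exact hA
          simp only [lowerModCl, mem_setOf_eq, not_forall] at this
          obtain ⟨S, hSmem, hSA, hScl⟩ := this
          rw [mem_closure_iff' T] at hScl
          push_neg at hScl
          obtain ⟨o, ho, hSo, hdisj⟩ := hScl
          refine ⟨{C : Set X | S ⊆ C}, ⟨⟨S, hSmem, rfl⟩, ?_⟩, hSA⟩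
          intro C hSC hC𝒜
          exact eq_empty_iff_forall_notMem.mp hdisj C ⟨hT o ho S hSo C hSC, hC𝒜⟩
        · rintro A ⟨V, ⟨_, hV⟩, hAV⟩
          exact hV hAV
      rw [this]
      apply TopologicalSpace.GenerateOpen.sUnion
      rintro V ⟨⟨S, hSmem, rfl⟩, -⟩
      apply TopologicalSpace.GenerateOpen.basic
      refine ⟨S, hSmem, ∅, h0, ?_⟩
      ext C; simp
  · rintro ⟨hTc, hτc⟩
    apply Subset.antisymm _ hsub
    intro A hA
    by_contra hA𝒜
    obtain ⟨S, hSmem, S', hS'mem, hSA, hAS', hcon⟩ :=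
      key 𝒜ᶜ hτc.isOpen_compl A hA𝒜
    have hScl : S ∈ @closure _ T 𝒜 := hA S hSmem hSA
    have hS𝒜 : S ∈ 𝒜 := (closure_subset_iff_isClosed' T).mpr hTc hScl
    have : S ∈ 𝒜ᶜ := hcon ⟨subset_rfl, subset_empty_iff.mp
      (by rw [← hAS']; exact inter_subset_inter_left _ hSA)⟩
    exact this hS𝒜
end

section
/- Let T be an upper hyperspace topology on the powerset of X (every open set is downward closed) and 𝒮 an ideal. The operator defined by A ∈ cl_𝒮^T(𝒜) iff A ∈ cl^T({B ∩ S | B ∈ 𝒜}) for every S ∈ 𝒮, is a Čech closure operator: extensive, monotone, and preserving binary unions. -/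
open Set Topology

/-- The upper bornological modification of a hyperspace topology `T`. -/
def upperModCl {X : Type*} (𝒮 : Set (Set X)) (T : TopologicalSpace (Set X))
    (𝒜 : Set (Set X)) : Set (Set X) :=
  {A | ∀ S ∈ 𝒮, A ∈ @closure (Set X) T {B' : Set X | ∃ B ∈ 𝒜, B' = B ∩ S}}

theorem stmt_16 {X : Type*} (𝒮 : Set (Set X)) (hS : IsIdeal 𝒮)
    (T : TopologicalSpace (Set X))
    (hT : ∀ 𝒢 : Set (Set X), IsOpen[T] 𝒢 → ∀ A ∈ 𝒢, ∀ B : Set X, B ⊆ A → B ∈ 𝒢) :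
    (∀ 𝒜 : Set (Set X), 𝒜 ⊆ upperModCl 𝒮 T 𝒜) ∧
    (∀ 𝒜 ℬ : Set (Set X), 𝒜 ⊆ ℬ → upperModCl 𝒮 T 𝒜 ⊆ upperModCl 𝒮 T ℬ) ∧
    (∀ 𝒜 ℬ : Set (Set X),
      upperModCl 𝒮 T (𝒜 ∪ ℬ) = upperModCl 𝒮 T 𝒜 ∪ upperModCl 𝒮 T ℬ) := by
  letI := T
  -- key lemma: closure restriction along S' ⊆ S
  have key : ∀ (𝒜 : Set (Set X)) (A S S' : Set X), S' ⊆ S →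
      A ∈ closure {B' : Set X | ∃ B ∈ 𝒜, B' = B ∩ S} →
      A ∈ closure {B' : Set X | ∃ B ∈ 𝒜, B' = B ∩ S'} := by
    intro 𝒜 A S S' hsub hA
    rw [mem_closure_iff] at hA ⊢
    intro o ho hAo
    obtain ⟨C, hCo, B, hB, rfl⟩ := hA o ho hAo
    exact ⟨B ∩ S', hT o ho (B ∩ S) hCo (B ∩ S') (inter_subset_inter_right B hsub),
      B, hB, rfl⟩
  have mono : ∀ 𝒜 ℬ : Set (Set X), 𝒜 ⊆ ℬ → upperModCl 𝒮 T 𝒜 ⊆ upperModCl 𝒮 T ℬ := by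
    intro 𝒜 ℬ hAB A hA S hSm
    refine closure_mono ?_ (hA S hSm)
    rintro B' ⟨B, hB, rfl⟩
    exact ⟨B, hAB hB, rfl⟩
  refine ⟨?_, mono, ?_⟩
  · intro 𝒜 A hA S hSm
    rw [mem_closure_iff]
    intro o ho hAo
    exact ⟨A ∩ S, hT o ho A hAo (A ∩ S) inter_subset_left, A, hA, rfl⟩
  · intro 𝒜 ℬ
    apply Subset.antisymm
    · intro A hA
      by_contra hcon
      rw [mem_union, not_or] at hcon
      obtain ⟨h1, h2⟩ := hcon
      simp only [upperModCl, mem_setOf_eq, not_forall] at h1 h2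
      obtain ⟨S1, hS1, hA1⟩ := h1
      obtain ⟨S2, hS2, hA2⟩ := h2
      have hSU : S1 ∪ S2 ∈ 𝒮 := hS.2.2 S1 hS1 S2 hS2
      have := hA S1 hS1
      have hU := hA (S1 ∪ S2) hSU
      have hsplit : {B' : Set X | ∃ B ∈ 𝒜 ∪ ℬ, B' = B ∩ (S1 ∪ S2)} =
          {B' : Set X | ∃ B ∈ 𝒜, B' = B ∩ (S1 ∪ S2)} ∪
          {B' : Set X | ∃ B ∈ ℬ, B' = B ∩ (S1 ∪ S2)} := by
        ext B'
        constructor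
        · rintro ⟨B, hB | hB, rfl⟩
          · exact Or.inl ⟨B, hB, rfl⟩
          · exact Or.inr ⟨B, hB, rfl⟩
        · rintro (⟨B, hB, rfl⟩ | ⟨B, hB, rfl⟩)
          · exact ⟨B, Or.inl hB, rfl⟩
          · exact ⟨B, Or.inr hB, rfl⟩
      rw [hsplit, closure_union] at hU
      rcases hU with hU | hU
      · exact hA1 (key 𝒜 A (S1 ∪ S2) S1 subset_union_left hU)
      · exact hA2 (key ℬ A (S1 ∪ S2) S2 subset_union_right hU)
    · rintro A (hA | hA)
      · exact mono 𝒜 (𝒜 ∪ ℬ) subset_union_left hA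
      · exact mono ℬ (𝒜 ∪ ℬ) subset_union_right hA
end

section
/- Let T be a miss hyperspace topology and 𝒮 an ideal. A collection 𝒜 satisfies cl_𝒮^T(𝒜) = 𝒜 if and only if 𝒜 is closed in T ∧ τ(𝒮); hence T ∧ τ(𝒮) is the topological reflection of the pretopology of the upper bornological modification of T. -/
open Set Topology

/-- In the topology generated by the sets `[S, S'] = {C | S ⊆ C ∧ C ∩ S' = ∅}` with
`S, S'` in an ideal, every open set containing `A` contains a basic set containing `A`. -/
lemma tauS_exists_basic {X : Type*} {𝒮 : Set (Set X)} (hS : IsIdeal 𝒮)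
    {u : Set (Set X)}
    (hu : TopologicalSpace.GenerateOpen
      {U | ∃ S ∈ 𝒮, ∃ S' ∈ 𝒮, U = {C : Set X | S ⊆ C ∧ C ∩ S' = ∅}} u) :
    ∀ A ∈ u, ∃ S ∈ 𝒮, ∃ S' ∈ 𝒮, S ⊆ A ∧ A ∩ S' = ∅ ∧
      {C : Set X | S ⊆ C ∧ C ∩ S' = ∅} ⊆ u := by
  induction hu with
  | basic v hv =>
      obtain ⟨S, hSm, S', hS'm, rfl⟩ := hv
      intro A hA
      exact ⟨S, hSm, S', hS'm, hA.1, hA.2, subset_rfl⟩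
  | univ =>
      intro A _
      refine ⟨∅, hS.1, ∅, hS.1, empty_subset A, inter_empty A, subset_univ _⟩
  | inter s t _ _ ihs iht =>
      intro A hA
      obtain ⟨S₁, hS₁, T₁, hT₁, hS₁A, hAT₁, hsub₁⟩ := ihs A hA.1
      obtain ⟨S₂, hS₂, T₂, hT₂, hS₂A, hAT₂, hsub₂⟩ := iht A hA.2
      refine ⟨S₁ ∪ S₂, hS.2.2 _ hS₁ _ hS₂, T₁ ∪ T₂, hS.2.2 _ hT₁ _ hT₂,
        union_subset hS₁A hS₂A, ?_, ?_⟩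
      · rw [inter_union_distrib_left, hAT₁, hAT₂, union_empty]
      · intro C hC
        refine ⟨hsub₁ ⟨(subset_union_left.trans hC.1), ?_⟩,
          hsub₂ ⟨(subset_union_right.trans hC.1), ?_⟩⟩
        · exact subset_empty_iff.mp (hC.2 ▸ inter_subset_inter_right C subset_union_left)
        · exact subset_empty_iff.mp (hC.2 ▸ inter_subset_inter_right C subset_union_right)
  | sUnion 𝒰 _ ih =>
      intro A hA
      obtain ⟨u, hu𝒰, hAu⟩ := hA
      obtain ⟨S, hSm, S', hS'm, h1, h2, h3⟩ := ih u hu𝒰 A hAu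
      exact ⟨S, hSm, S', hS'm, h1, h2, h3.trans (subset_sUnion_of_mem hu𝒰)⟩

/-- A collection is closed for the upper bornological modification of a miss topology `T`
iff it is closed in the infimum topology `T ∧ τ(𝒮)` (i.e. closed in both). -/
theorem stmt_18 {X : Type*} (𝒮 : Set (Set X)) (hS : IsIdeal 𝒮)
    (T : TopologicalSpace (Set X))
    (hmiss : @TopologicalSpace.IsTopologicalBasis (Set X) T
      {𝒢 : Set (Set X) | ∃ G : Set X, 𝒢 = {A : Set X | A ⊆ G}}) :
    ∀ 𝒜 : Set (Set X),
      upperModCl 𝒮 T 𝒜 = 𝒜 ↔ (IsClosed[T] 𝒜 ∧ IsClosed[tauS 𝒮] 𝒜) := by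
  -- closure in T is the upward closure
  have hTcl : ∀ (ℬ : Set (Set X)) (A : Set X),
      A ∈ @closure (Set X) T ℬ ↔ ∃ B ∈ ℬ, B ⊆ A := by
    intro ℬ A
    rw [@TopologicalSpace.IsTopologicalBasis.mem_closure_iff (Set X) T _ hmiss ℬ A]
    constructor
    · intro h
      obtain ⟨B, hB1, hB2⟩ := h {C : Set X | C ⊆ A} ⟨A, rfl⟩ (subset_rfl : A ⊆ A)
      exact ⟨B, hB2, hB1⟩
    · rintro ⟨B, hB, hBA⟩ o ⟨G, rfl⟩ hA
      exact ⟨B, hBA.trans hA, hB⟩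
  intro 𝒜
  -- the fixpoint equation is equivalent to this closure condition
  have hfix_iff : upperModCl 𝒮 T 𝒜 = 𝒜 ↔
      ∀ A, (∀ S ∈ 𝒮, ∃ B ∈ 𝒜, B ∩ S ⊆ A) → A ∈ 𝒜 := by
    constructor
    · intro hfix A hA
      rw [← hfix]
      intro S hSm
      rw [hTcl]
      obtain ⟨B, hB, h⟩ := hA S hSm
      exact ⟨B ∩ S, ⟨B, hB, rfl⟩, h⟩
    · intro key
      apply subset_antisymm
      · intro A hA
        apply key
        intro S hSm
        obtain ⟨B', ⟨B, hB, rfl⟩, hsub⟩ := (hTcl _ A).mp (hA S hSm)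
        exact ⟨B, hB, hsub⟩
      · intro A hA S hSm
        rw [hTcl]
        exact ⟨A ∩ S, ⟨A, hA, rfl⟩, inter_subset_left⟩
  rw [hfix_iff]
  constructor
  · intro key
    constructor
    · -- closed in T
      rw [← @isOpen_compl_iff (Set X) 𝒜 T]
      rw [@TopologicalSpace.IsTopologicalBasis.isOpen_iff (Set X) T _ _ hmiss]
      intro A hA
      refine ⟨{C : Set X | C ⊆ A}, ⟨A, rfl⟩, (subset_rfl : A ⊆ A), ?_⟩
      intro C hCA hC
      exact hA (key A (fun S hSm => ⟨C, hC, inter_subset_left.trans hCA⟩))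
    · -- closed in tauS
      rw [← @isOpen_compl_iff (Set X) 𝒜 (tauS 𝒮)]
      have : 𝒜ᶜ = ⋃₀ {U | (∃ S ∈ 𝒮, ∃ S' ∈ 𝒮,
          U = {C : Set X | S ⊆ C ∧ C ∩ S' = ∅}) ∧ U ⊆ 𝒜ᶜ} := by
        apply subset_antisymm
        · intro A hA
          have hA' : A ∉ 𝒜 := hA
          have : ¬ ∀ S ∈ 𝒮, ∃ B ∈ 𝒜, B ∩ S ⊆ A := fun h => hA' (key A h)
          push_neg at this
          obtain ⟨S, hSm, hSbad⟩ := this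
          refine ⟨{C : Set X | A ∩ S ⊆ C ∧ C ∩ (S \ A) = ∅},
            ⟨⟨A ∩ S, hS.2.1 S hSm _ inter_subset_right, S \ A,
              hS.2.1 S hSm _ diff_subset, rfl⟩, ?_⟩,
            ⟨inter_subset_left, by simp⟩⟩
          intro C hC hCA
          apply hSbad C hCA
          intro x hx
          by_contra hxA
          have hmem : x ∈ C ∩ (S \ A) := ⟨hx.1, hx.2, hxA⟩
          rw [hC.2] at hmem
          exact hmem
        · rintro A ⟨U, ⟨_, hU⟩, hAU⟩
          exact hU hAU
      rw [this]
      exact TopologicalSpace.GenerateOpen.sUnion _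
        (fun U hU => TopologicalSpace.GenerateOpen.basic U hU.1)
  · rintro ⟨hT, hτ⟩ A hA
    by_contra hA𝒜
    have hopen : TopologicalSpace.GenerateOpen
        {U | ∃ S ∈ 𝒮, ∃ S' ∈ 𝒮, U = {C : Set X | S ⊆ C ∧ C ∩ S' = ∅}} 𝒜ᶜ :=
      (@isOpen_compl_iff (Set X) 𝒜 (tauS 𝒮)).mpr hτ
    obtain ⟨S, hSm, S', hS'm, hSA, hAS', hsub⟩ := tauS_exists_basic hS hopen A hA𝒜
    obtain ⟨B, hB, hBA⟩ := hA (S ∪ S') (hS.2.2 _ hSm _ hS'm)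
    -- B ∪ S belongs to 𝒜 (upward closedness from T-closedness)
    have hBS : B ∪ S ∈ 𝒜 := by
      have : B ∪ S ∈ @closure (Set X) T 𝒜 := (hTcl 𝒜 (B ∪ S)).mpr ⟨B, hB, subset_union_left⟩
      exact hT.closure_subset this
    apply hsub (a := B ∪ S) ⟨subset_union_right, ?_⟩ hBS
    rw [union_inter_distrib_right]
    have h1 : B ∩ S' = ∅ := by
      apply subset_empty_iff.mp
      intro x hx
      exact hAS' ▸ (⟨hBA ⟨hx.1, Or.inr hx.2⟩, hx.2⟩ : x ∈ A ∩ S')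
    have h2 : S ∩ S' = ∅ := by
      apply subset_empty_iff.mp
      intro x hx
      exact hAS' ▸ (⟨hSA hx.1, hx.2⟩ : x ∈ A ∩ S')
    rw [h1, h2, union_empty]
end
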